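/- arXiv:2303.15175 — 2 statements merged into one kernel-verified Lean document; each statement's English description precedes it below -/
import Mathlib

section
/- If X ∈ ℝ^{n×nN} and U ∈ ℝ^{m×nN} satisfy AX + BU = X(P ⊗ I_n), then the sequences x(t) = X(e_{t+1} ⊗ x₀) and u(t) = U(e_{t+1} ⊗ x₀), for t = 0, …, N-1, satisfy the recursion x(t+1) = A x(t) + B u(t) for all t = 0, …, N-2. -/
open Matrix
open scoped Kronecker

/-- The N×N lower shift matrix: ones on the first subdiagonal. -/
def shiftP (N : ℕ) : Matrix (Fin N) (Fin N) ℝ :=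
  Matrix.of fun i j => if (i : ℕ) = (j : ℕ) + 1 then 1 else 0

/-- Kronecker product of a standard basis vector of ℝ^N with a vector x ∈ ℝ^n. -/
def kv {N n : ℕ} (i : Fin N) (x : Fin n → ℝ) : Fin N × Fin n → ℝ :=
  fun p => (if p.1 = i then 1 else 0) * x p.2

/-- The matrix Z = [0_{n(N-1)×n}, I_{n(N-1)}]. -/
def Zmat (n N : ℕ) : Matrix (Fin (N-1) × Fin n) (Fin N × Fin n) ℝ :=
  Matrix.of fun p q => if (q.1 : ℕ) = (p.1 : ℕ) + 1 ∧ q.2 = p.2 then 1 else 0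

lemma shift_kv {n N : ℕ} (x₀ : Fin n → ℝ) (t : ℕ) (ht : t + 1 < N) :
    (shiftP N ⊗ₖ (1 : Matrix (Fin n) (Fin n) ℝ)).mulVec
      (kv ⟨t, Nat.lt_of_succ_lt ht⟩ x₀) = kv ⟨t + 1, ht⟩ x₀ := by
  funext p
  simp only [mulVec, dotProduct, kroneckerMap_apply, kv, Fintype.sum_prod_type, shiftP,
    Matrix.of_apply, Matrix.one_apply]
  rw [Finset.sum_eq_single (⟨t, Nat.lt_of_succ_lt ht⟩ : Fin N)]
  · simp only [if_pos rfl, mul_one]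
    rw [Finset.sum_eq_single p.2]
    · simp only [if_pos rfl]
      by_cases hp : (p.1 : ℕ) = t + 1
      · have : p.1 = (⟨t + 1, ht⟩ : Fin N) := Fin.ext hp
        simp [this, hp]
      · have : p.1 ≠ (⟨t + 1, ht⟩ : Fin N) := fun h => hp (by simp [h])
        simp [this, hp]
    · intro b _ hb; simp [hb.symm]
    · simp
  · intro b _ hb
    have : b ≠ (⟨t, Nat.lt_of_succ_lt ht⟩ : Fin N) := hb
    simp [this]
  · simp

/-- If AX + BU = X(P ⊗ I_n), then x(t) = X(e_{t+1} ⊗ x₀), u(t) = U(e_{t+1} ⊗ x₀)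
satisfy the recursion x(t+1) = A x(t) + B u(t) for t = 0, …, N-2. -/
theorem state_recursion {n m N : ℕ}
    (A : Matrix (Fin n) (Fin n) ℝ) (B : Matrix (Fin n) (Fin m) ℝ)
    (X : Matrix (Fin n) (Fin N × Fin n) ℝ) (U : Matrix (Fin m) (Fin N × Fin n) ℝ)
    (h : A * X + B * U = X * (shiftP N ⊗ₖ (1 : Matrix (Fin n) (Fin n) ℝ)))
    (x₀ : Fin n → ℝ) (t : ℕ) (ht : t + 1 < N) :
    X.mulVec (kv ⟨t + 1, ht⟩ x₀)
      = A.mulVec (X.mulVec (kv ⟨t, Nat.lt_of_succ_lt ht⟩ x₀))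
        + B.mulVec (U.mulVec (kv ⟨t, Nat.lt_of_succ_lt ht⟩ x₀)) := by
  rw [← shift_kv x₀ t ht, mulVec_mulVec, ← h, add_mulVec, mulVec_mulVec, mulVec_mulVec]
end

section
/- Under the hypotheses AX + BU = X(P ⊗ I_n), X(e₁ ⊗ I_n) = I_n, Z = [0, I_{n(N-1)}], V = Z(P ⊗ I_n), and [[K,H],[G,F]][[X],[Z]] = [[U],[V]], the augmented closed-loop matrix 𝒜_cl = [[A + BK, BH],[G, F]] satisfies 𝒜_cl Ψ = Ψ (P ⊗ I_n) where Ψ = [[X],[Z]]; hence 𝒜_cl = Ψ(P ⊗ I_n)Ψ⁻¹ and 𝒜_cl^N = 0. -/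
open Matrix
open scoped Kronecker

lemma shiftP_pow (N k : ℕ) :
    (shiftP N) ^ k
      = Matrix.of fun i j : Fin N => if (i : ℕ) = (j : ℕ) + k then (1 : ℝ) else 0 := by
  induction k with
  | zero =>
    ext i j
    simp [Matrix.one_apply, Fin.ext_iff]
  | succ k ih =>
    ext i j
    rw [pow_succ, ih]
    simp only [Matrix.mul_apply, Matrix.of_apply, shiftP, ite_mul, one_mul, zero_mul,
      mul_ite, mul_one, mul_zero]
    by_cases h : (j : ℕ) + 1 < N
    · rw [Finset.sum_eq_single (⟨(j : ℕ) + 1, h⟩ : Fin N)]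
      · simp only [Fin.ext_iff]
        split_ifs <;> first | rfl | omega
      · intro b _ hb
        simp [Fin.ext_iff] at hb ⊢
        omega
      · simp
    · rw [Finset.sum_eq_zero, eq_comm]
      · rw [ite_eq_right_iff]
        intro hc
        exfalso; omega
      · intro b _
        have : (b : ℕ) < N := b.2
        rw [ite_eq_right_iff, ite_eq_right_iff]
        intro h1 h2
        exfalso; omega

lemma shiftP_pow_self (N : ℕ) : (shiftP N) ^ N = 0 := by
  rw [shiftP_pow]
  ext i j
  have : (i : ℕ) < N := i.2
  simp only [Matrix.of_apply, Matrix.zero_apply, ite_eq_right_iff]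
  intro h; exfalso; omega

lemma kron_one_pow {N n : ℕ} (M : Matrix (Fin N) (Fin N) ℝ) (k : ℕ) :
    (M ⊗ₖ (1 : Matrix (Fin n) (Fin n) ℝ)) ^ k = (M ^ k) ⊗ₖ 1 := by
  induction k with
  | zero => simp [Matrix.one_kronecker_one]
  | succ k ih =>
    rw [pow_succ, pow_succ, ih, ← Matrix.mul_kronecker_mul, mul_one]

lemma Zmat_apply_eq {n N : ℕ} (p : Fin (N-1) × Fin n) (q : Fin N × Fin n) :
    Zmat n N p q
      = if q = (⟨(p.1 : ℕ) + 1, by have := p.1.2; omega⟩, p.2) then 1 else 0 := by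
  simp [Zmat, Prod.ext_iff, Fin.ext_iff]

/-- Closed-loop realization: under the sparse-optimization and feedback-realization
equations, the augmented closed-loop matrix 𝒜_cl = [[A+BK, BH],[G, F]] satisfies
𝒜_cl Ψ = Ψ (P ⊗ I_n) with Ψ = [[X],[Z]], and 𝒜_cl^N = 0. -/
theorem closed_loop_similarity_and_nilpotent {n m N : ℕ} (hN : 0 < N)
    (A : Matrix (Fin n) (Fin n) ℝ) (B : Matrix (Fin n) (Fin m) ℝ)
    (X : Matrix (Fin n) (Fin N × Fin n) ℝ) (U : Matrix (Fin m) (Fin N × Fin n) ℝ)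
    (K : Matrix (Fin m) (Fin n) ℝ) (H : Matrix (Fin m) (Fin (N - 1) × Fin n) ℝ)
    (G : Matrix (Fin (N - 1) × Fin n) (Fin n) ℝ)
    (F : Matrix (Fin (N - 1) × Fin n) (Fin (N - 1) × Fin n) ℝ)
    (hX : ∀ i j, X i (⟨0, hN⟩, j) = if i = j then (1 : ℝ) else 0)
    (hdyn : A * X + B * U = X * (shiftP N ⊗ₖ (1 : Matrix (Fin n) (Fin n) ℝ)))
    (hKH : K * X + H * Zmat n N = U)
    (hGF : G * X + F * Zmat n N
        = Zmat n N * (shiftP N ⊗ₖ (1 : Matrix (Fin n) (Fin n) ℝ))) :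
    Matrix.fromBlocks (A + B * K) (B * H) G F * Matrix.fromRows X (Zmat n N)
        = Matrix.fromRows X (Zmat n N) * (shiftP N ⊗ₖ (1 : Matrix (Fin n) (Fin n) ℝ))
      ∧ Matrix.fromBlocks (A + B * K) (B * H) G F ^ N = 0 := by
  set S := shiftP N ⊗ₖ (1 : Matrix (Fin n) (Fin n) ℝ) with hS
  set z0 : Fin N := ⟨0, hN⟩ with hz0
  -- the similarity identity
  have hsim : Matrix.fromBlocks (A + B * K) (B * H) G F * Matrix.fromRows X (Zmat n N)
      = Matrix.fromRows X (Zmat n N) * S := by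
    have htop : (A + B * K) * X + B * H * Zmat n N = X * S := by
      calc (A + B * K) * X + B * H * Zmat n N
          = A * X + B * (K * X + H * Zmat n N) := by
            rw [Matrix.add_mul, Matrix.mul_add, Matrix.mul_assoc, Matrix.mul_assoc]
            abel
        _ = X * S := by rw [hKH, hdyn]
    rw [Matrix.fromBlocks_mul_fromRows, Matrix.fromRows_mul, htop, hGF]
  refine ⟨hsim, ?_⟩
  -- the right inverse of Ψ = fromRows X Z
  set pk : Fin (N - 1) → Fin N :=
    fun k => ⟨(k : ℕ) + 1, by have := k.2; omega⟩ with hpk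
  set W : Matrix (Fin N × Fin n) (Fin n ⊕ Fin (N - 1) × Fin n) ℝ :=
    Matrix.of fun q s =>
      Sum.elim (fun i => if q = (z0, i) then (1 : ℝ) else 0)
        (fun kj => (if q = (pk kj.1, kj.2) then (1 : ℝ) else 0)
          - (if q.1 = z0 then X q.2 (pk kj.1, kj.2) else 0)) s with hW
  have hZ : ∀ p q, Zmat n N p q = if q = (pk p.1, p.2) then (1:ℝ) else 0 := by
    intro p q
    simp [Zmat, hpk, Prod.ext_iff, Fin.ext_iff]
  have hinv : Matrix.fromRows X (Zmat n N) * W = 1 := by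
    ext s s'
    cases s with
    | inl i =>
      cases s' with
      | inl i' =>
        simp only [Matrix.mul_apply, Matrix.fromRows_apply_inl, hW, Matrix.of_apply,
          Sum.elim_inl, mul_ite, mul_one, mul_zero]
        rw [Finset.sum_ite_eq' Finset.univ ((z0, i') : Fin N × Fin n) (X i)]
        simp [Matrix.one_apply, hX i i']
      | inr kj =>
        simp only [Matrix.mul_apply, Matrix.fromRows_apply_inl, hW, Matrix.of_apply,
          Sum.elim_inr, mul_sub, mul_ite, mul_one, mul_zero]
        rw [Finset.sum_sub_distrib]
        rw [Finset.sum_ite_eq' Finset.univ ((pk kj.1, kj.2) : Fin N × Fin n) (X i)]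
        have key : ∀ q : Fin N × Fin n,
            (if q.1 = z0 then X i q * X q.2 (pk kj.1, kj.2) else 0)
              = if q = ((z0, i) : Fin N × Fin n) then X q.2 (pk kj.1, kj.2) else 0 := by
          rintro ⟨a, b⟩
          by_cases ha : a = z0
          · subst ha
            simp only [if_pos rfl]
            rw [hX i b]
            by_cases hb : b = i
            · subst hb; simp
            · simp [hb, Ne.symm hb, Prod.ext_iff]
          · simp [ha, Prod.ext_iff]
        rw [Finset.sum_congr rfl (fun q _ => key q)]
        rw [Finset.sum_ite_eq' Finset.univ ((z0, i) : Fin N × Fin n)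
          (fun q => X q.2 (pk kj.1, kj.2))]
        simp [Matrix.one_apply]
    | inr p =>
      have hrow : ∀ s', (Matrix.fromRows X (Zmat n N) * W) (Sum.inr p) s'
          = W (pk p.1, p.2) s' := by
        intro s'
        simp only [Matrix.mul_apply, Matrix.fromRows_apply_inr]
        simp_rw [hZ p]
        simp only [ite_mul, one_mul, zero_mul]
        rw [Finset.sum_ite_eq' Finset.univ ((pk p.1, p.2) : Fin N × Fin n) (fun q => W q s')]
        simp
      cases s' with
      | inl i' =>
        rw [hrow]
        have : (pk p.1, p.2) ≠ ((z0, i') : Fin N × Fin n) := by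
          simp [hpk, hz0, Prod.ext_iff, Fin.ext_iff]
        simp [hW, this, Matrix.one_apply, hpk, hz0, Fin.ext_iff]
      | inr kj =>
        rw [hrow]
        have h1 : ((pk p.1, p.2).1 : Fin N) ≠ z0 := by
          simp [hpk, hz0, Fin.ext_iff]
        simp only [hW, Matrix.of_apply, Sum.elim_inr, if_neg h1, sub_zero]
        have : ((pk p.1, p.2) = (pk kj.1, kj.2)) ↔ p = kj := by
          simp [hpk, Prod.ext_iff, Fin.ext_iff]
        rw [Matrix.one_apply]
        simp [this, Prod.ext_iff]
  -- similarity for powers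
  have hpow : ∀ k : ℕ, Matrix.fromBlocks (A + B * K) (B * H) G F ^ k
      * Matrix.fromRows X (Zmat n N) = Matrix.fromRows X (Zmat n N) * S ^ k := by
    intro k
    induction k with
    | zero => simp
    | succ k ih =>
      rw [pow_succ, pow_succ, Matrix.mul_assoc, hsim, ← Matrix.mul_assoc, ih, Matrix.mul_assoc]
  have hSN : S ^ N = 0 := by
    rw [hS, kron_one_pow, shiftP_pow_self, Matrix.zero_kronecker]
  calc Matrix.fromBlocks (A + B * K) (B * H) G F ^ N
      = Matrix.fromBlocks (A + B * K) (B * H) G F ^ N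
        * (Matrix.fromRows X (Zmat n N) * W) := by rw [hinv, Matrix.mul_one]
    _ = (Matrix.fromRows X (Zmat n N) * S ^ N) * W := by
        rw [← Matrix.mul_assoc, hpow]
    _ = 0 := by rw [hSN, Matrix.mul_zero, Matrix.zero_mul]
end
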